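/- Let E be a formally real field and F₀ = E(X) the rational function field in one variable over E. Then the subgroup of the quotient group F₀×/(F₀×)² generated by the images of the elements X² + a², as a ranges over E×, is infinite. In particular, F₀×/(F₀×)² is an infinite group. -/

import Mathlib

open scoped TensorProduct

/-- The `n`-fold tensor power of a `K`-algebra `D`. -/
abbrev tensorPow (K : Type) [Field K] (D : Type) [Ring D] [Algebra K D] (n : ℕ) : Type :=
  ⨂[K] _ : Fin n, D

/-- `A` is split over `K`: isomorphic to a matrix algebra `M_n(K)`, `n ≥ 1`. -/
def IsSplitAlgebra (K : Type) [Field K] (A : Type) [Ring A] [Algebra K A] : Prop :=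
  ∃ n : ℕ, 0 < n ∧ Nonempty (A ≃ₐ[K] Matrix (Fin n) (Fin n) K)

/-- The exponent of a central simple `K`-algebra `D`: the order of its Brauer class,
i.e. the least `n ≥ 1` such that the `n`-fold tensor power of `D` is split. -/
noncomputable def brExponent (K : Type) [Field K] (D : Type) [Ring D] [Algebra K D] : ℕ :=
  sInf {n : ℕ | 0 < n ∧ IsSplitAlgebra K (tensorPow K D n)}

/-- `D` is a finite-dimensional central division algebra over `K`. -/
def IsCentralDivision (K : Type) [Field K] (D : Type) [DivisionRing D] [Algebra K D] : Prop :=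
  FiniteDimensional K D ∧ Subalgebra.center K D = ⊥

/-- The Brauer class of `D` is `p`-primary: its exponent is a power of `p`. -/
def IsPPrimary (K : Type) [Field K] (p : ℕ) (D : Type) [Ring D] [Algebra K D] : Prop :=
  ∃ k : ℕ, brExponent K D = p ^ k

/-- There is a finite-dimensional central division `K`-algebra with `p`-primary Brauer
class whose Schur index exceeds the `m`-th power of its exponent.  (Thus
`Brd_p(K) ≥ m + 1`.) -/
def HasBrdWitness (K : Type) [Field K] (p m : ℕ) : Prop :=
  ∃ (D : Type) (_ : DivisionRing D) (_ : Algebra K D),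
    IsCentralDivision K D ∧ IsPPrimary K p D ∧
    ∃ i : ℕ, i * i = Module.finrank K D ∧ (brExponent K D) ^ m < i

/-- There is a finite separable extension `K'/K` admitting such a witness
(thus `abrd_p(K) ≥ m + 1`). -/
def HasAbrdWitness (K : Type) [Field K] (p m : ℕ) : Prop :=
  ∃ (K' : Type) (_ : Field K') (_ : Algebra K K'),
    FiniteDimensional K K' ∧ Algebra.IsSeparable K K' ∧ HasBrdWitness K' p m

/-- Every finite-dimensional central division `K`-algebra with `p`-primary Brauer class
has Schur index at most the `n`-th power of its exponent (`Brd_p(K) ≤ n`). -/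
def BrdLE (K : Type) [Field K] (p n : ℕ) : Prop :=
  ∀ (D : Type) (_ : DivisionRing D) (_ : Algebra K D),
    IsCentralDivision K D → IsPPrimary K p D →
    ∀ i : ℕ, i * i = Module.finrank K D → i ≤ (brExponent K D) ^ n

/-- A field is nonreal if `-1` is a sum of squares in it. -/
def IsNonreal (K : Type) [Field K] : Prop :=
  ∃ (n : ℕ) (x : Fin n → K), (-1 : K) = ∑ i, (x i) ^ 2

/-- A field extension `F/E` is finitely generated (as a field extension). -/
def IsFGFieldExt (E F : Type) [Field E] [Field F] [Algebra E F] : Prop :=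
  (⊤ : IntermediateField E F).FG

/-- `F/E` has transcendence degree `t`. -/
def HasTrdeg (E F : Type) [Field E] [Field F] [Algebra E F] (t : ℕ) : Prop :=
  ∃ x : Fin t → F, IsTranscendenceBasis E x

/-- The square-class group `K×/(K×)²` of a field `K`. -/
abbrev SqClassGroup (K : Type) [Field K] : Type :=
  Kˣ ⧸ (powMonoidHom 2 : Kˣ →* Kˣ).range

open Polynomial

section st14aux

variable {E : Type} [Field E]

lemma st14_charZero
    (hE : ¬ (∃ (n : ℕ) (x : Fin n → E), (-1 : E) = ∑ i, (x i) ^ 2)) : CharZero E := by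
  obtain ⟨p, hp⟩ := CharP.exists E
  rcases CharP.char_is_prime_or_zero E p with hpp | rfl
  · exfalso
    refine hE ⟨p - 1, fun _ => 1, ?_⟩
    have h0 : ((p : ℕ) : E) = 0 := CharP.cast_eq_zero E p
    have hcast : ((p - 1 : ℕ) : E) = -1 := by
      have h1 : 1 ≤ p := hpp.one_lt.le
      push_cast [Nat.cast_sub h1]
      rw [h0]; ring
    simp [hcast]
  · exact CharP.charP_to_charZero E

lemma st14_irred {a : E}
    (hE : ¬ (∃ (n : ℕ) (x : Fin n → E), (-1 : E) = ∑ i, (x i) ^ 2)) (ha : a ≠ 0) :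
    Irreducible (X ^ 2 + C (a ^ 2) : E[X]) := by
  have h : (X ^ 2 + C (a ^ 2) : E[X]) = X ^ 2 - C (-(a ^ 2)) := by
    rw [map_neg, sub_neg_eq_add]
  rw [h]
  refine X_pow_sub_C_irreducible_of_prime Nat.prime_two fun b hb => ?_
  refine hE ⟨1, fun _ => b / a, ?_⟩
  have : (b / a) ^ 2 = -1 := by field_simp [hb]; exact hb
  simp [this]

lemma st14_poly {a b : E} (hne : a ^ 2 ≠ b ^ 2)
    (hirr : Irreducible (X ^ 2 + C (a ^ 2) : E[X])) (p q : E[X]) (hcop : IsCoprime p q)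
    (heq : (X ^ 2 + C (b ^ 2)) * q ^ 2 = (X ^ 2 + C (a ^ 2)) * p ^ 2) : False := by
  set pa : E[X] := X ^ 2 + C (a ^ 2) with hpa
  set pb : E[X] := X ^ 2 + C (b ^ 2) with hpb
  have hprime : Prime pa := hirr.prime
  have hnd : ¬ pa ∣ pb := by
    intro hd
    have hsub : pa ∣ pb - pa := dvd_sub hd dvd_rfl
    have hsubeq : pb - pa = C (b ^ 2 - a ^ 2) := by
      rw [hpa, hpb, map_sub]; ring
    rw [hsubeq] at hsub
    have hu : IsUnit (C (b ^ 2 - a ^ 2) : E[X]) :=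
      Polynomial.isUnit_C.mpr (isUnit_iff_ne_zero.mpr (sub_ne_zero.mpr (Ne.symm hne)))
    exact hirr.not_isUnit (isUnit_of_dvd_unit hsub hu)
  have hdvd_q : pa ∣ q := by
    have h1 : pa ∣ pb * q ^ 2 := ⟨p ^ 2, heq⟩
    rcases hprime.2.2 _ _ h1 with h | h
    · exact absurd h hnd
    · exact hprime.dvd_of_dvd_pow h
  obtain ⟨s, rfl⟩ := hdvd_q
  have hcancel : pb * pa * s ^ 2 = p ^ 2 := by
    have hpa0 : pa ≠ 0 := hirr.ne_zero
    apply mul_left_cancel₀ hpa0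
    rw [← heq]; ring
  have hdvd_p : pa ∣ p := hprime.dvd_of_dvd_pow ⟨pb * s ^ 2, by rw [← hcancel]; ring⟩
  exact hirr.not_isUnit (hcop.isUnit_of_dvd' hdvd_p (Dvd.intro s rfl))

lemma st14_sq_eq
    (hE : ¬ (∃ (n : ℕ) (x : Fin n → E), (-1 : E) = ∑ i, (x i) ^ 2))
    {a b : E} (ha : a ≠ 0) (hb : b ≠ 0) (u v : (RatFunc E)ˣ)
    (hu : (u : RatFunc E) = algebraMap E[X] (RatFunc E) (X ^ 2 + C (a ^ 2)))
    (hv : (v : RatFunc E) = algebraMap E[X] (RatFunc E) (X ^ 2 + C (b ^ 2)))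
    (h : (QuotientGroup.mk u : (RatFunc E)ˣ ⧸ (powMonoidHom 2 : (RatFunc E)ˣ →* (RatFunc E)ˣ).range)
        = QuotientGroup.mk v) : a ^ 2 = b ^ 2 := by
  by_contra hne
  rw [QuotientGroup.eq] at h
  obtain ⟨w, hw⟩ := h
  have hw' : (w : (RatFunc E)) ^ 2 = (u : RatFunc E)⁻¹ * v := by
    have := congrArg (Units.val) hw
    simpa [powMonoidHom_apply] using this
  set f : RatFunc E := (w : RatFunc E)
  have hq0 : algebraMap E[X] (RatFunc E) f.denom ≠ 0 :=
    RatFunc.algebraMap_ne_zero (f.denom_ne_zero)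
  have hfp : f * algebraMap E[X] (RatFunc E) f.denom = algebraMap E[X] (RatFunc E) f.num := by
    have h2 := div_mul_cancel₀ (algebraMap E[X] (RatFunc E) f.num) hq0
    rwa [RatFunc.num_div_denom] at h2
  have hu0 : (u : RatFunc E) ≠ 0 := u.ne_zero
  have hmain : (algebraMap E[X] (RatFunc E)) ((X ^ 2 + C (b ^ 2)) * f.denom ^ 2)
      = (algebraMap E[X] (RatFunc E)) ((X ^ 2 + C (a ^ 2)) * f.num ^ 2) := by
    have hv' : (v : RatFunc E) = (u : RatFunc E) * f ^ 2 := by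
      rw [hw', mul_inv_cancel_left₀ hu0]
    rw [map_mul, map_mul, map_pow _ f.denom 2, map_pow _ f.num 2, ← hu, ← hv, hv', ← hfp]
    ring
  have heq := RatFunc.algebraMap_injective E hmain
  exact st14_poly hne (st14_irred hE ha) f.num f.denom (RatFunc.isCoprime_num_denom f) heq

end st14aux

/-- If `E` is formally real and `F₀ = E(X)`, then the subgroup of
`F₀×/(F₀×)²` generated by the classes of the elements `X² + a²`, `a ∈ E×`, is infinite;
in particular `F₀×/(F₀×)²` is infinite. -/
theorem statement14 (E : Type) [Field E] (hE : ¬ IsNonreal E) :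
    Set.Infinite ((Subgroup.closure
        {q : SqClassGroup (RatFunc E) | ∃ (a : E) (u : (RatFunc E)ˣ), a ≠ 0 ∧
          (u : RatFunc E) = RatFunc.X ^ 2 + algebraMap E (RatFunc E) (a ^ 2) ∧
          QuotientGroup.mk u = q} : Subgroup (SqClassGroup (RatFunc E))) :
      Set (SqClassGroup (RatFunc E))) ∧
    Infinite (SqClassGroup (RatFunc E)) := by
  have hE' : ¬ (∃ (n : ℕ) (x : Fin n → E), (-1 : E) = ∑ i, (x i) ^ 2) := hE
  haveI : CharZero E := st14_charZero hE'
  have hcast : ∀ n : ℕ, ((n : E) + 1) ≠ 0 := fun n => Nat.cast_add_one_ne_zero n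
  have hne0 : ∀ n : ℕ,
      algebraMap (Polynomial E) (RatFunc E)
        (Polynomial.X ^ 2 + Polynomial.C (((n : E) + 1) ^ 2)) ≠ 0 :=
    fun n => RatFunc.algebraMap_ne_zero (st14_irred hE' (hcast n)).ne_zero
  set u : ℕ → (RatFunc E)ˣ := fun n => Units.mk0 _ (hne0 n) with hu
  set g : ℕ → SqClassGroup (RatFunc E) := fun n => QuotientGroup.mk (u n) with hg
  have hginj : Function.Injective g := by
    intro m n h
    have h2 : ((m : E) + 1) ^ 2 = ((n : E) + 1) ^ 2 :=
      st14_sq_eq hE' (hcast m) (hcast n) (u m) (u n) rfl rfl h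
    have h3 : (((m : E) + 1) - ((n : E) + 1)) * (((m : E) + 1) + ((n : E) + 1)) = 0 := by
      linear_combination h2
    rcases mul_eq_zero.mp h3 with h4 | h4
    · have h5 : (m : E) = (n : E) := by linear_combination h4
      exact_mod_cast h5
    · exfalso
      have h6 : ((m + n + 2 : ℕ) : E) = 0 := by push_cast; linear_combination h4
      exact Nat.cast_ne_zero.mpr (by omega) h6
  have hmem : ∀ n : ℕ, g n ∈
      {q : SqClassGroup (RatFunc E) | ∃ (a : E) (u : (RatFunc E)ˣ), a ≠ 0 ∧
          (u : RatFunc E) = RatFunc.X ^ 2 + algebraMap E (RatFunc E) (a ^ 2) ∧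
          QuotientGroup.mk u = q} := by
    intro n
    refine ⟨(n : E) + 1, u n, hcast n, ?_, rfl⟩
    show algebraMap (Polynomial E) (RatFunc E)
        (Polynomial.X ^ 2 + Polynomial.C (((n : E) + 1) ^ 2))
      = RatFunc.X ^ 2 + algebraMap E (RatFunc E) (((n : E) + 1) ^ 2)
    rw [map_add, map_pow _ Polynomial.X 2, RatFunc.algebraMap_X, RatFunc.algebraMap_C,
      RatFunc.algebraMap_eq_C]
  have h1 : Set.Infinite ((Subgroup.closure
      {q : SqClassGroup (RatFunc E) | ∃ (a : E) (u : (RatFunc E)ˣ), a ≠ 0 ∧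
          (u : RatFunc E) = RatFunc.X ^ 2 + algebraMap E (RatFunc E) (a ^ 2) ∧
          QuotientGroup.mk u = q} : Subgroup (SqClassGroup (RatFunc E))) :
      Set (SqClassGroup (RatFunc E))) :=
    Set.infinite_of_injective_forall_mem hginj
      (fun n => Subgroup.subset_closure (hmem n))
  exact ⟨h1, Set.infinite_univ_iff.mp (h1.mono (Set.subset_univ _))⟩
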